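/- Let M = A[ρ, x₁] be the polynomial ring over A in two further variables, and let Ψ : M → A ⊗_{𝔽₂} M be the unique 𝔽₂-algebra homomorphism with Ψ(ξₙ) = Δ(ξₙ) for all n ≥ 1 (viewing A ⊗ A ⊆ A ⊗ M), Ψ(ρ) = 1 ⊗ ρ, and Ψ(x₁) = 1 ⊗ x₁ + ξ₁ ⊗ ρ. Define x₀ = ρ and, for m ≥ 2, xₘ = Σ_{i=0}^{m−1} xᵢ·ζ_{m−i}^{2^i} ∈ M. Then for every n ≥ 0, Ψ(xₙ) = Σ_{i=0}^{n} ξᵢ^{2^{n−i}} ⊗ x_{n−i}. -/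
import Mathlib

/-!
STATEMENT 4: In `M = A[ρ, x₁]`, the comodule structure map `Ψ` with `Ψ(ξₙ) = Δ(ξₙ)`
(viewing `A ⊗ A ⊆ A ⊗ M`), `Ψ(ρ) = 1 ⊗ ρ`, `Ψ(x₁) = 1 ⊗ x₁ + ξ₁ ⊗ ρ` satisfies
`Ψ(xₙ) = Σ_{i=0}^{n} ξᵢ^{2^{n−i}} ⊗ x_{n−i}` for the classes `x₀ = ρ`,
`xₘ = Σ_{i=0}^{m−1} xᵢ·ζ_{m−i}^{2^i}` (`m ≥ 2`).

Here `A = MvPolynomial ℕ (ZMod 2)` with `X i = ξ_{i+1}` (`ξ₀ = 1`), `M = MvPolynomial (Fin 2) A`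
with `ρ = X 0` and `x₁ = X 1`, `Δ` is the Milnor coproduct, and the conjugates `ζₙ` satisfy
`ζ₀ = 1`, `ζₙ = Σ_{j<n} ξ_{n−j}^{2^j}·ζⱼ`.
-/

open MvPolynomial TensorProduct

section Conv
variable {R : Type*} [CommSemiring R]

/-- Twisted convolution: `(f ⋆ g) n = ∑_{i+j=n} f i ^ 2^j * g j`. -/
def conv (f g : ℕ → R) : ℕ → R :=
  fun n => ∑ j ∈ Finset.range (n + 1), f (n - j) ^ 2 ^ j * g j

/-- The unit sequence. -/
def dseq : ℕ → R := fun n => if n = 0 then 1 else 0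

lemma conv_dseq_left (g : ℕ → R) : conv (dseq : ℕ → R) g = g := by
  funext n
  unfold conv dseq
  rw [Finset.sum_eq_single n]
  · simp
  · intro j hj hjn
    have hj' : j < n := lt_of_le_of_ne (Nat.lt_succ_iff.mp (Finset.mem_range.mp hj)) hjn
    have : n - j ≠ 0 := by omega
    simp [this, zero_pow (pow_ne_zero _ (two_ne_zero))]
  · intro h; exact absurd (Finset.self_mem_range_succ n) h


lemma conv_zero (f g : ℕ → R) : conv f g 0 = f 0 * g 0 := by
  simp [conv]

lemma conv_one (f g : ℕ → R) : conv f g 1 = f 1 * g 0 + f 0 ^ 2 * g 1 := by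
  unfold conv
  rw [Finset.sum_range_succ, Finset.sum_range_one]
  norm_num

lemma conv_succ (f g : ℕ → R) (n : ℕ) : conv f g (n + 1)
    = (∑ j ∈ Finset.range (n + 1), f (n + 1 - j) ^ 2 ^ j * g j) + f 0 ^ 2 ^ (n + 1) * g (n + 1) := by
  unfold conv
  rw [Finset.sum_range_succ, Nat.sub_self]

lemma ringHom_comp_conv {S : Type*} [CommSemiring S] (h : R →+* S) (f g : ℕ → R) (n : ℕ) :
    h (conv f g n) = conv (fun k => h (f k)) (fun k => h (g k)) n := by
  unfold conv
  rw [map_sum]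
  exact Finset.sum_congr rfl fun j _ => by rw [map_mul, map_pow]

lemma ringHom_dseq {S : Type*} [CommSemiring S] (h : R →+* S) (n : ℕ) :
    h (dseq n) = dseq n := by
  unfold dseq; split <;> simp

/-- triangle reindexing -/
lemma triangle_sum {M : Type*} [AddCommMonoid M] (n : ℕ) (F : ℕ → ℕ → M) :
    ∑ j ∈ Finset.range (n + 1), ∑ k ∈ Finset.range (j + 1), F j k
      = ∑ k ∈ Finset.range (n + 1), ∑ j ∈ Finset.range (n + 1 - k), F (j + k) k := by
  induction n with
  | zero => simp
  | succ n ih =>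
    rw [Finset.sum_range_succ, ih, Finset.sum_range_succ (fun k => ∑ j ∈ Finset.range (n + 2 - k), F (j + k) k)]
    have h1 : ∑ k ∈ Finset.range (n + 1), ∑ j ∈ Finset.range (n + 2 - k), F (j + k) k
        = ∑ k ∈ Finset.range (n + 1), (∑ j ∈ Finset.range (n + 1 - k), F (j + k) k + F (n + 1) k) := by
      refine Finset.sum_congr rfl fun k hk => ?_
      have hk' := Finset.mem_range.mp hk
      have h2 : n + 2 - k = (n + 1 - k) + 1 := by omega
      rw [h2, Finset.sum_range_succ]
      congr 2
      omega
    rw [h1, Finset.sum_add_distrib]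
    have h3 : ∑ j ∈ Finset.range (n + 2 - (n + 1)), F (j + (n + 1)) (n + 1) = F (n + 1) (n + 1) := by
      simp
    rw [h3, Finset.sum_range_succ (fun k => F (n + 1) k)]
    abel

lemma conv_assoc [CharP R 2] (f g h : ℕ → R) : conv (conv f g) h = conv f (conv g h) := by
  funext n
  unfold conv
  have hrhs : ∑ j ∈ Finset.range (n + 1), f (n - j) ^ 2 ^ j *
        ∑ k ∈ Finset.range (j + 1), g (j - k) ^ 2 ^ k * h k
      = ∑ j ∈ Finset.range (n + 1), ∑ k ∈ Finset.range (j + 1),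
          f (n - j) ^ 2 ^ j * (g (j - k) ^ 2 ^ k * h k) := by
    exact Finset.sum_congr rfl fun j _ => Finset.mul_sum _ _ _
  rw [hrhs, triangle_sum n (fun j k => f (n - j) ^ 2 ^ j * (g (j - k) ^ 2 ^ k * h k))]
  refine Finset.sum_congr rfl fun k hk => ?_
  have hk' : k ≤ n := Nat.lt_succ_iff.mp (Finset.mem_range.mp hk)
  have hsub : n - k + 1 = n + 1 - k := by omega
  rw [sum_pow_char_pow, Finset.sum_mul, ← hsub]
  refine Finset.sum_congr rfl fun j hj => ?_
  have hj' : j ≤ n - k := Nat.lt_succ_iff.mp (Finset.mem_range.mp hj)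
  rw [mul_pow, ← pow_mul, ← pow_add]
  have e1 : n - (j + k) = n - k - j := by omega
  have e2 : j + k - k = j := by omega
  rw [e1, e2]
  ring

end Conv

noncomputable section

abbrev A4 := MvPolynomial ℕ (ZMod 2)
abbrev M4 := MvPolynomial (Fin 2) A4

/-- `xiA 0 = 1` (the convention `ξ₀ = 1`) and `xiA (i+1)` is the variable `ξ_{i+1}`. -/
def xiA : ℕ → A4
  | 0 => 1
  | i + 1 => X i

/-- multiplication map, used to show the tensor product is nontrivial -/
def mu4 : A4 ⊗[ZMod 2] M4 →ₐ[ZMod 2] M4 :=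
  Algebra.TensorProduct.lift (IsScalarTower.toAlgHom (ZMod 2) A4 M4) (AlgHom.id _ _)
    (fun _ _ => mul_comm _ _)

instance : Nontrivial (A4 ⊗[ZMod 2] M4) := mu4.toRingHom.domain_nontrivial

instance : CharP (A4 ⊗[ZMod 2] M4) 2 :=
  charP_of_injective_algebraMap (algebraMap (ZMod 2) _).injective 2

def F4 : ℕ → A4 ⊗[ZMod 2] M4 := fun n => xiA n ⊗ₜ[ZMod 2] (1 : M4)

def G4 : ℕ → A4 ⊗[ZMod 2] M4 := fun n => (1 : A4) ⊗ₜ[ZMod 2] (C (xiA n) : M4)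


set_option maxHeartbeats 1000000 in
theorem stmt_4
    (zeta : ℕ → A4) (hz0 : zeta 0 = 1)
    (hzS : ∀ n : ℕ, zeta (n + 1) =
      ∑ j ∈ Finset.range (n + 1), xiA (n + 1 - j) ^ 2 ^ j * zeta j)
    (Δ : A4 →ₐ[ZMod 2] A4 ⊗[ZMod 2] A4)
    (hΔ : ∀ n : ℕ, Δ (xiA (n + 1)) =
      ∑ i ∈ Finset.range (n + 2), (xiA (n + 1 - i) ^ 2 ^ i) ⊗ₜ[ZMod 2] xiA i)
    (Ψ : M4 →ₐ[ZMod 2] A4 ⊗[ZMod 2] M4)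
    (hΨξ : ∀ n : ℕ, Ψ (C (xiA (n + 1))) =
      (Algebra.TensorProduct.map (AlgHom.id (ZMod 2) A4)
        (IsScalarTower.toAlgHom (ZMod 2) A4 M4)) (Δ (xiA (n + 1))))
    (hΨρ : Ψ (X 0) = 1 ⊗ₜ[ZMod 2] X 0)
    (hΨx : Ψ (X 1) = 1 ⊗ₜ[ZMod 2] X 1 + xiA 1 ⊗ₜ[ZMod 2] X 0)
    (x : ℕ → M4) (hx0 : x 0 = X 0) (hx1 : x 1 = X 1)
    (hxS : ∀ (m : ℕ) (_hm : 2 ≤ m),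
      x m = ∑ i ∈ Finset.range m, x i * C (zeta (m - i) ^ 2 ^ i)) :
    ∀ n : ℕ, Ψ (x n) =
      ∑ i ∈ Finset.range (n + 1), (xiA i ^ 2 ^ (n - i)) ⊗ₜ[ZMod 2] x (n - i) := by
  classical
  have hxiA0 : xiA 0 = 1 := rfl
  -- ζ₁ = ξ₁
  have hz1 : zeta 1 = xiA 1 := by
    rw [hzS 0]; simp [hz0]
  -- the fundamental relation ξ ⋆ ζ = δ
  have Lz : conv xiA zeta = (dseq : ℕ → A4) := by
    funext n
    cases n with
    | zero => simp [conv_zero, dseq, hz0, hxiA0]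
    | succ n =>
      rw [conv_succ, ← hzS n, hxiA0, one_pow, one_mul, CharTwo.add_self_eq_zero]
      simp [dseq]
  -- the sequence e
  set e : ℕ → M4 := fun n =>
    if n = 0 then X 0 else if n = 1 then C (zeta 1) * X 0 + X 1 else 0 with he
  have he0 : e 0 = X 0 := rfl
  have he1 : e 1 = C (zeta 1) * X 0 + X 1 := rfl
  have he2 : ∀ m, e (m + 2) = 0 := fun m => rfl
  -- conv (C ∘ ζ) x = e
  have E1 : conv (fun n => (C (zeta n) : M4)) x = e := by
    funext n
    match n with
    | 0 => rw [conv_zero, he0, hz0, map_one, one_mul, hx0]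
    | 1 =>
      rw [conv_one, he1, hz0, map_one, one_pow, one_mul, hx0, hx1]
    | (m + 2) =>
      rw [conv_succ, he2, hz0, map_one, one_pow, one_mul]
      have hsum : ∑ j ∈ Finset.range (m + 2), (fun n => (C (zeta n) : M4)) (m + 2 - j) ^ 2 ^ j * x j
          = x (m + 2) := by
        rw [hxS (m + 2) (by omega)]
        exact Finset.sum_congr rfl fun j _ => by rw [map_pow, mul_comm]
      rw [hsum, CharTwo.add_self_eq_zero]
  -- conv (C ∘ ξ) (C ∘ ζ) = δ in M4
  have Lz' : conv (fun n => (C (xiA n) : M4)) (fun n => (C (zeta n) : M4)) = (dseq : ℕ → M4) := by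
    funext n
    rw [← ringHom_comp_conv (C : A4 →+* M4) xiA zeta n, Lz, ringHom_dseq]
  -- x = conv (C ∘ ξ) e
  have x_eq : x = conv (fun n => (C (xiA n) : M4)) e := by
    rw [← E1, ← conv_assoc, Lz', conv_dseq_left]
  -- Ψ on C ξ
  have hone : ((1 : A4) ⊗ₜ[ZMod 2] (1 : M4)) = (1 : A4 ⊗[ZMod 2] M4) := rfl
  have ΨCξ : ∀ n, Ψ (C (xiA n)) = conv F4 G4 n := by
    intro n
    match n with
    | 0 =>
      rw [conv_zero]
      show Ψ (C 1) = F4 0 * G4 0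
      rw [map_one, map_one]
      show (1 : A4 ⊗[ZMod 2] M4) = (1 ⊗ₜ[ZMod 2] 1) * (1 ⊗ₜ[ZMod 2] C 1)
      rw [map_one, hone, one_mul]
    | (n + 1) =>
      rw [hΨξ n, hΔ n, map_sum]
      unfold conv
      refine Finset.sum_congr rfl fun j hj => ?_
      rw [Algebra.TensorProduct.map_tmul]
      show (xiA (n + 1 - j) ^ 2 ^ j) ⊗ₜ[ZMod 2] (algebraMap A4 M4) (xiA j)
        = (xiA (n + 1 - j) ⊗ₜ[ZMod 2] (1 : M4)) ^ 2 ^ j * ((1 : A4) ⊗ₜ[ZMod 2] (C (xiA j) : M4))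
      rw [Algebra.TensorProduct.tmul_pow, one_pow, Algebra.TensorProduct.tmul_mul_tmul,
        mul_one, one_mul, MvPolynomial.algebraMap_eq]
  -- Ψ on e
  have Ψe : ∀ n, Ψ (e n) = (1 : A4) ⊗ₜ[ZMod 2] e n := by
    intro n
    match n with
    | 0 => rw [he0]; exact hΨρ
    | 1 =>
      have h1 : Ψ (C (xiA 1)) = xiA 1 ⊗ₜ[ZMod 2] (1 : M4)
          + (1 : A4) ⊗ₜ[ZMod 2] (C (xiA 1) : M4) := by
        rw [ΨCξ 1, conv_one]
        show F4 1 * (1 ⊗ₜ[ZMod 2] C (xiA 0)) + ((1:A4) ⊗ₜ[ZMod 2] (1:M4)) ^ 2 * G4 1 = _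
        rw [hxiA0, map_one, hone, one_pow, one_mul, mul_one]
        rfl
      rw [he1, map_add, map_mul, hz1, h1, hΨρ, hΨx]
      rw [add_mul, Algebra.TensorProduct.tmul_mul_tmul, Algebra.TensorProduct.tmul_mul_tmul]
      rw [tmul_add]
      simp only [mul_one, one_mul]
      linear_combination (CharTwo.add_self_eq_zero (xiA 1 ⊗ₜ[ZMod 2] (X 0 : M4)) : _)
    | (m + 2) =>
      rw [he2, map_zero, tmul_zero]
  -- main computation
  intro n
  have main : Ψ (x n) = conv F4 (fun k => (1 : A4) ⊗ₜ[ZMod 2] x k) n := by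
    have step1 : Ψ (x n) = conv (fun k => Ψ (C (xiA k))) (fun k => Ψ (e k)) n := by
      conv_lhs => rw [x_eq]
      exact ringHom_comp_conv (Ψ : M4 →+* A4 ⊗[ZMod 2] M4) _ _ n
    rw [step1]
    have hf1 : (fun k => Ψ (C (xiA k))) = conv F4 G4 := funext ΨCξ
    have hf2 : (fun k => Ψ (e k)) = fun k => (1 : A4) ⊗ₜ[ZMod 2] e k := funext Ψe
    rw [hf1, hf2, conv_assoc]
    congr 1
    have h2 : ∀ k, conv G4 (fun k => (1 : A4) ⊗ₜ[ZMod 2] e k) k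
        = (1 : A4) ⊗ₜ[ZMod 2] conv (fun m => (C (xiA m) : M4)) e k := by
      intro k
      have h3 := ringHom_comp_conv
        ((Algebra.TensorProduct.includeRight : M4 →ₐ[ZMod 2] A4 ⊗[ZMod 2] M4) :
          M4 →+* A4 ⊗[ZMod 2] M4) (fun m => (C (xiA m) : M4)) e k
      exact h3.symm
    funext k
    rw [h2 k, ← x_eq]
  rw [main]
  -- reindex the sum
  have hrefl := Finset.sum_range_reflect
    (fun j => (xiA (n - j) ^ 2 ^ j) ⊗ₜ[ZMod 2] x j) (n + 1)
  have lhs_eq : ∑ i ∈ Finset.range (n + 1), (xiA i ^ 2 ^ (n - i)) ⊗ₜ[ZMod 2] x (n - i)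
      = ∑ j ∈ Finset.range (n + 1), (xiA (n - j) ^ 2 ^ j) ⊗ₜ[ZMod 2] x j := by
    rw [← hrefl]
    refine Finset.sum_congr rfl fun i hi => ?_
    have hi' : i ≤ n := Nat.lt_succ_iff.mp (Finset.mem_range.mp hi)
    have e1 : n + 1 - 1 - i = n - i := by omega
    have e2 : n - (n - i) = i := by omega
    rw [e1, e2]
  rw [lhs_eq]
  unfold conv
  refine Finset.sum_congr rfl fun j hj => ?_
  show (xiA (n - j) ⊗ₜ[ZMod 2] (1 : M4)) ^ 2 ^ j * ((1 : A4) ⊗ₜ[ZMod 2] x j)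
    = (xiA (n - j) ^ 2 ^ j) ⊗ₜ[ZMod 2] x j
  rw [Algebra.TensorProduct.tmul_pow, one_pow, Algebra.TensorProduct.tmul_mul_tmul,
    mul_one, one_mul]

end
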